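/- Fix an integer d ≥ 1 and let Q be a d×d real matrix with Q_{ij} > 0 for all i ≠ j and Σ_{j=1}^d Q_{ij} = 0 for every i. Let ν ∈ ℝ^d satisfy ν_i > 0 for all i and Σ_{i=1}^d ν_i = 1, and suppose u* ∈ U attains the infimum inf_{u∈U} Σ_{i=1}^d ν_i (Qu)_i / u_i. Define the d×d matrix Q(u*) by Q(u*)_{ij} = Q_{ij} · u*_j / u*_i for i ≠ j and Q(u*)_{ii} = −Σ_{j≠i} Q_{ij} · u*_j / u*_i. Then ν is the unique invariant probability vector of Q(u*): the transpose identity ν^T Q(u*) = 0 holds, and any μ ∈ ℝ^d with μ_i ≥ 0 for all i, Σ_{i=1}^d μ_i = 1 and μ^T Q(u*) = 0 equals ν. -/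

import Mathlib

/-!
Moving `u*` along the `k`-th coordinate, the first-order condition of the minimisation reads
`∑ᵢ νᵢ Q_ik / u*ᵢ = ν_k (Qu*)_k / u*_k²`, and `(νᵀ Q(u*))_k` is `u*_k` times the difference of the
two sides, so `ν` is invariant. Uniqueness is a maximum principle: `Q(u*)` has positive
off-diagonal entries, so if `r = maxᵢ μᵢ / νᵢ` is attained at `k`, then `rν - μ` is a nonnegative
left null vector vanishing at `k`, and column `k` of `(rν - μ)ᵀ Q(u*) = 0` forces `rν = μ`.
-/

open Finset Filter Topology

namespace Matrix

variable {ι : Type*} [Fintype ι]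

section LeftKernel

variable {A : Matrix ι ι ℝ}

theorem eq_zero_of_vecMul_eq_zero_of_nonneg (hA : ∀ i j, i ≠ j → 0 < A i j) {w : ι → ℝ}
    (hw : w ᵥ* A = 0) (hw0 : 0 ≤ w) {k : ι} (hk : w k = 0) : w = 0 := by
  classical
  have hcol : ∑ i ∈ univ.erase k, w i * A i k = 0 := by
    have h := congrFun hw k
    rwa [vecMul, dotProduct, ← add_sum_erase _ _ (mem_univ k), hk, zero_mul, zero_add] at h
  funext i
  by_cases hik : i = k
  · rw [hik, hk, Pi.zero_apply]
  · have hterm := (sum_eq_zero_iff_of_nonneg fun j hj =>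
      mul_nonneg (hw0 j) (hA j k (ne_of_mem_erase hj)).le).1 hcol i (mem_erase.2 ⟨hik, mem_univ i⟩)
    exact (mul_eq_zero.1 hterm).resolve_right (hA i k hik).ne'

theorem exists_eq_smul_of_vecMul_eq_zero (hA : ∀ i j, i ≠ j → 0 < A i j) {ν μ : ι → ℝ}
    (hν : ∀ i, 0 < ν i) (hνA : ν ᵥ* A = 0) (hμA : μ ᵥ* A = 0) : ∃ r : ℝ, μ = r • ν := by
  cases isEmpty_or_nonempty ι
  · exact ⟨0, Subsingleton.elim _ _⟩
  obtain ⟨k, -, hk⟩ := exists_max_image univ (fun i => μ i / ν i) univ_nonempty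
  refine ⟨μ k / ν k, (sub_eq_zero.1 (eq_zero_of_vecMul_eq_zero_of_nonneg hA ?_ ?_ (k := k) ?_)).symm⟩
  · rw [sub_vecMul, smul_vecMul, hνA, hμA, smul_zero, sub_zero]
  · intro i
    have h := hk i (mem_univ i)
    rw [div_le_div_iff₀ (hν i) (hν k)] at h
    simp only [Pi.zero_apply, Pi.sub_apply, Pi.smul_apply, smul_eq_mul, sub_nonneg]
    rw [div_mul_eq_mul_div, le_div_iff₀ (hν k)]
    linarith
  · simp [div_mul_cancel₀ _ (hν k).ne']

theorem eq_of_vecMul_eq_zero_of_sum_eq (hA : ∀ i j, i ≠ j → 0 < A i j) {ν μ : ι → ℝ}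
    (hν : ∀ i, 0 < ν i) (hνA : ν ᵥ* A = 0) (hμA : μ ᵥ* A = 0) (hsum : ∑ i, μ i = ∑ i, ν i) :
    μ = ν := by
  cases isEmpty_or_nonempty ι
  · exact Subsingleton.elim _ _
  obtain ⟨r, rfl⟩ := exists_eq_smul_of_vecMul_eq_zero hA hν hνA hμA
  have hpos : 0 < ∑ i, ν i := sum_pos (fun i _ => hν i) univ_nonempty
  simp only [Pi.smul_apply, smul_eq_mul, ← mul_sum] at hsum
  rw [(mul_eq_right₀ hpos.ne').1 hsum, one_smul]

end LeftKernel

noncomputable def ratioCost (ν : ι → ℝ) (Q : Matrix ι ι ℝ) (u : ι → ℝ) : ℝ :=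
  ∑ i, ν i * ((Q *ᵥ u) i / u i)

section Stationarity

variable {ν : ι → ℝ} {Q : Matrix ι ι ℝ} {u : ι → ℝ}

theorem hasDerivAt_ratioCost_add_smul (hu : ∀ i, u i ≠ 0) (v : ι → ℝ) :
    HasDerivAt (fun t : ℝ => ratioCost ν Q (u + t • v))
      (∑ i, ν i * (((Q *ᵥ v) i * u i - (Q *ᵥ u) i * v i) / u i ^ 2)) 0 := by
  simp only [ratioCost, mulVec_add, mulVec_smul, Pi.add_apply, Pi.smul_apply, smul_eq_mul]
  refine HasDerivAt.fun_sum fun i _ => HasDerivAt.const_mul _ ?_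
  have hnum := ((hasDerivAt_id (0 : ℝ)).mul_const ((Q *ᵥ v) i)).const_add ((Q *ᵥ u) i)
  have hden := ((hasDerivAt_id (0 : ℝ)).mul_const (v i)).const_add (u i)
  simpa using hnum.fun_div hden (by simpa using hu i)

theorem isLocalMin_ratioCost_add_smul (hu : ∀ i, 0 < u i)
    (hmin : IsMinOn (ratioCost ν Q) {u | ∀ i, 0 < u i} u) (v : ι → ℝ) :
    IsLocalMin (fun t : ℝ => ratioCost ν Q (u + t • v)) 0 := by
  have hpos : ∀ᶠ t : ℝ in 𝓝 0, ∀ i, 0 < (u + t • v) i := by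
    refine eventually_all.2 fun i => ?_
    have hcont : Continuous fun t : ℝ => (u + t • v) i := by fun_prop
    exact continuousAt_const.eventually_lt hcont.continuousAt (by simpa using hu i)
  filter_upwards [hpos] with t ht
  simpa using hmin ht

theorem sum_mul_div_eq_of_isMinOn_ratioCost [DecidableEq ι] (hu : ∀ i, 0 < u i)
    (hmin : IsMinOn (ratioCost ν Q) {u | ∀ i, 0 < u i} u) (k : ι) :
    ∑ i, ν i * (Q i k / u i) = ν k * ((Q *ᵥ u) k / u k ^ 2) := by
  have hderiv := (isLocalMin_ratioCost_add_smul hu hmin (Pi.single k 1)).hasDerivAt_eq_zero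
    (hasDerivAt_ratioCost_add_smul (fun i => (hu i).ne') (Pi.single k 1))
  simp only [mulVec_single_one, col_apply, sub_div, mul_sub, sum_sub_distrib, Pi.single_apply,
    ite_div, mul_ite, mul_one, mul_zero, zero_div, sum_ite_eq', mem_univ, if_true] at hderiv
  rw [← sub_eq_zero, ← hderiv]
  congr 1
  refine sum_congr rfl fun i _ => ?_
  field_simp [(hu i).ne']

end Stationarity

variable [DecidableEq ι]

/-- `Q(u)`: equal to `(diag u)⁻¹ Q (diag u)` off the diagonal, with the diagonal chosen so that
every row sums to zero. -/
noncomputable def hTransform (Q : Matrix ι ι ℝ) (u : ι → ℝ) : Matrix ι ι ℝ :=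
  of fun i j => if i = j then -∑ j' ∈ univ.erase i, Q i j' * (u j' / u i) else Q i j * (u j / u i)

variable {Q : Matrix ι ι ℝ} {u : ι → ℝ}

theorem hTransform_apply {i : ι} (hu : u i ≠ 0) (j : ι) :
    hTransform Q u i j = Q i j * (u j / u i) - if i = j then (Q *ᵥ u) i / u i else 0 := by
  by_cases hij : i = j
  · subst hij
    simp only [hTransform, of_apply, if_true, mulVec, dotProduct, sum_div]
    rw [← add_sum_erase _ _ (mem_univ i)]
    simp only [mul_div_assoc, div_self hu]
    ring
  · simp [hTransform, hij]

theorem hTransform_pos (hQ : ∀ i j, i ≠ j → 0 < Q i j) (hu : ∀ i, 0 < u i) {i j : ι}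
    (hij : i ≠ j) : 0 < hTransform Q u i j := by
  simpa [hTransform, hij] using mul_pos (hQ i j hij) (div_pos (hu j) (hu i))

theorem vecMul_hTransform_apply (hu : ∀ i, u i ≠ 0) (ν : ι → ℝ) (k : ι) :
    (ν ᵥ* hTransform Q u) k = u k * (∑ i, ν i * (Q i k / u i) - ν k * ((Q *ᵥ u) k / u k ^ 2)) := by
  simp only [vecMul, dotProduct, hTransform_apply (hu _), mul_sub, sum_sub_distrib, mul_ite,
    mul_zero, sum_ite_eq', mem_univ, if_true, mul_sum]
  congr 1
  · refine sum_congr rfl fun i _ => ?_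
    ring
  · field_simp [hu k]

theorem vecMul_hTransform_eq_zero_of_isMinOn {ν : ι → ℝ} (hu : ∀ i, 0 < u i)
    (hmin : IsMinOn (ratioCost ν Q) {u | ∀ i, 0 < u i} u) : ν ᵥ* hTransform Q u = 0 := by
  funext k
  rw [vecMul_hTransform_apply (fun i => (hu i).ne'), sum_mul_div_eq_of_isMinOn_ratioCost hu hmin, sub_self,
    mul_zero, Pi.zero_apply]

end Matrix

open Matrix

theorem invariant_vector_of_optimizer (d : ℕ)
    (Q : Matrix (Fin d) (Fin d) ℝ)
    (hQpos : ∀ i j : Fin d, i ≠ j → 0 < Q i j)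
    (ν : Fin d → ℝ) (hνpos : ∀ i : Fin d, 0 < ν i) (hνsum : ∑ i : Fin d, ν i = 1)
    (ustar : Fin d → ℝ) (hupos : ∀ i : Fin d, 0 < ustar i)
    (hmin : ∀ u : Fin d → ℝ, (∀ i : Fin d, 0 < u i) →
      ∑ i : Fin d, ν i * (Q.mulVec ustar i / ustar i) ≤
        ∑ i : Fin d, ν i * (Q.mulVec u i / u i))
    (Qstar : Matrix (Fin d) (Fin d) ℝ)
    (hQstar : ∀ i j : Fin d,
      Qstar i j = if i = j then -∑ j' ∈ Finset.univ.erase i, Q i j' * (ustar j' / ustar i)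
        else Q i j * (ustar j / ustar i)) :
    Matrix.vecMul ν Qstar = 0 ∧
      ∀ μ : Fin d → ℝ, (∀ i : Fin d, 0 ≤ μ i) → ∑ i : Fin d, μ i = 1 →
        Matrix.vecMul μ Qstar = 0 → μ = ν := by
  obtain rfl : Qstar = hTransform Q ustar := ext hQstar
  have hinv : ν ᵥ* hTransform Q ustar = 0 := vecMul_hTransform_eq_zero_of_isMinOn hupos hmin
  refine ⟨hinv, fun μ _ hμsum hμ => ?_⟩
  exact eq_of_vecMul_eq_zero_of_sum_eq (fun _ _ => hTransform_pos hQpos hupos) hνpos hinv hμ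
    (hμsum.trans hνsum.symm)
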